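/- For any connected graph G of order n, 2n + 1 ≤ γ_rdR(G ⊙ K₁) ≤ 3n. -/

import Mathlib

/-!
Every pendant vertex `v'` of `G ⊙ K₁` has `v` as its only neighbour, so `v'` cannot take the
value `0` (it would need a neighbour with value `0` that also carries the domination), and if it
takes `1` then `v` takes at least `2`. Hence each pair `{v, v'}` carries weight at least `2`, with
equality only for the values `f v = 0`, `f v' = 2`. Not every pair can be tight: a vertex `v` of
`G` with `f v = 0` would then see no `3` and only one `2`. Conversely, `2` on `G` and `1` on the
pendant vertices is a restrained double Roman dominating function of weight `3n`.
-/

open SimpleGraph Finset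

/-- A restrained double Roman dominating function. -/
def IsRDRD {α : Type*} (G : SimpleGraph α) (f : α → ℕ) : Prop :=
  (∀ v, f v ≤ 3) ∧
  (∀ v, f v = 0 →
    (∃ u, G.Adj v u ∧ f u = 3) ∨
    (∃ u w, u ≠ w ∧ G.Adj v u ∧ G.Adj v w ∧ f u = 2 ∧ f w = 2)) ∧
  (∀ v, f v = 1 → ∃ u, G.Adj v u ∧ 2 ≤ f u) ∧
  (∀ v, f v = 0 → ∃ u, G.Adj v u ∧ f u = 0)

/-- The restrained double Roman domination number. -/
noncomputable def gammaRdR {α : Type*} (G : SimpleGraph α) [Fintype α] : ℕ :=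
  sInf {w | ∃ f, IsRDRD G f ∧ ∑ v, f v = w}

/-- The strong product of two simple graphs. -/
def strongProd {α β : Type*} (G : SimpleGraph α) (H : SimpleGraph β) :
    SimpleGraph (α × β) where
  Adj p q := p ≠ q ∧ (G.Adj p.1 q.1 ∨ p.1 = q.1) ∧ (H.Adj p.2 q.2 ∨ p.2 = q.2)
  symm := by
    constructor
    rintro p q ⟨h1, h2, h3⟩
    exact ⟨h1.symm, h2.imp (fun h => G.adj_symm h) Eq.symm, h3.imp (fun h => H.adj_symm h) Eq.symm⟩
  loopless := by constructor; rintro p ⟨h1, _⟩; exact h1 rfl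

/-- The cardinal (direct/tensor) product of two simple graphs. -/
def cardProd {α β : Type*} (G : SimpleGraph α) (H : SimpleGraph β) :
    SimpleGraph (α × β) where
  Adj p q := G.Adj p.1 q.1 ∧ H.Adj p.2 q.2
  symm := by constructor; rintro p q ⟨h1, h2⟩; exact ⟨h1.symm, h2.symm⟩
  loopless := by constructor; rintro p ⟨h1, _⟩; exact G.loopless.irrefl _ h1

/-- The corona of two simple graphs. -/
def corona {α β : Type*} (G : SimpleGraph α) (H : SimpleGraph β) :
    SimpleGraph (α ⊕ α × β) where
  Adj x y :=
    match x, y with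
    | .inl u, .inl v => G.Adj u v
    | .inl u, .inr (v, _) => u = v
    | .inr (v, _), .inl u => u = v
    | .inr (u, a), .inr (v, b) => u = v ∧ H.Adj a b
  symm := by
    constructor
    rintro (u | ⟨u, a⟩) (v | ⟨v, b⟩) h
    · exact h.symm
    · exact h
    · exact h
    · exact ⟨h.1.symm, h.2.symm⟩
  loopless := by
    constructor
    rintro (u | ⟨u, a⟩) h
    · exact G.loopless.irrefl _ h
    · exact H.loopless.irrefl _ h.2

section Domination

variable {V : Type*} {G : SimpleGraph V} {f : V → ℕ}

theorem isRDRD_const_three (G : SimpleGraph V) : IsRDRD G (fun _ => 3) := by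
  refine ⟨fun _ => le_rfl, ?_, ?_, ?_⟩ <;> intro v hv <;> simp at hv

theorem IsRDRD.gammaRdR_le [Fintype V] (hf : IsRDRD G f) : gammaRdR G ≤ ∑ v, f v :=
  Nat.sInf_le ⟨f, hf, rfl⟩

theorem le_gammaRdR [Fintype V] {k : ℕ} (h : ∀ f, IsRDRD G f → k ≤ ∑ v, f v) :
    k ≤ gammaRdR G := by
  refine le_csInf ⟨_, _, isRDRD_const_three G, rfl⟩ ?_
  rintro w ⟨f, hf, rfl⟩
  exact h f hf

theorem IsRDRD.pos_of_forall_adj_eq (hf : IsRDRD G f) {x u : V} (hx : ∀ y, G.Adj x y → y = u) :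
    0 < f x := by
  obtain ⟨-, hdom, -, hres⟩ := hf
  by_contra! h
  have hx0 : f x = 0 := by omega
  obtain ⟨y, hxy, hy⟩ := hres x hx0
  have hu0 : f u = 0 := hx y hxy ▸ hy
  rcases hdom x hx0 with ⟨y, hxy, hy⟩ | ⟨y, z, hyz, hxy, hxz, -, -⟩
  · rw [hx y hxy] at hy
    omega
  · exact hyz ((hx y hxy).trans (hx z hxz).symm)

theorem IsRDRD.leaf_cases (hf : IsRDRD G f) {x u : V} (hx : ∀ y, G.Adj x y → y = u) :
    2 ≤ f x + f u ∧ (f x + f u ≤ 2 → f x = 2 ∧ f u = 0) := by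
  have hpos := hf.pos_of_forall_adj_eq hx
  have hone : f x = 1 → 2 ≤ f u := fun h1 => by
    obtain ⟨y, hxy, hy⟩ := hf.2.2.1 x h1
    exact hx y hxy ▸ hy
  omega

end Domination

section Corona

variable {α β : Type*} {G : SimpleGraph α}

theorem corona_bot_adj_inr_iff {v : α} {b : β} {x : α ⊕ α × β} :
    (corona G (⊥ : SimpleGraph β)).Adj (.inr (v, b)) x ↔ x = .inl v := by
  rcases x with u | ⟨u, c⟩ <;> simp [corona, eq_comm]

theorem isRDRD_corona_two_one (G : SimpleGraph α) (H : SimpleGraph β) :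
    IsRDRD (corona G H) (Sum.elim (fun _ => 2) (fun _ => 1)) := by
  refine ⟨?_, ?_, ?_, ?_⟩
  · rintro (v | v) <;> simp
  · rintro (v | v) h <;> simp at h
  · rintro (v | ⟨v, b⟩) h
    · simp at h
    · exact ⟨.inl v, rfl, by simp⟩
  · rintro (v | v) h <;> simp at h

theorem sum_corona_fin_one [Fintype α] (f : α ⊕ α × Fin 1 → ℕ) :
    ∑ x, f x = ∑ v, (f (.inl v) + f (.inr (v, 0))) := by
  rw [Fintype.sum_sum_type, Fintype.sum_prod_type, ← Finset.sum_add_distrib]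
  simp

theorem IsRDRD.leaf_cases_corona {f : α ⊕ α × Fin 1 → ℕ}
    (hf : IsRDRD (corona G (⊥ : SimpleGraph (Fin 1))) f) (v : α) :
    2 ≤ f (.inl v) + f (.inr (v, 0)) ∧
      (f (.inl v) + f (.inr (v, 0)) ≤ 2 → f (.inl v) = 0 ∧ f (.inr (v, 0)) = 2) := by
  have := hf.leaf_cases (x := .inr (v, 0)) fun _ => corona_bot_adj_inr_iff.mp
  omega

theorem IsRDRD.exists_three_le_corona [Fintype α] [Nonempty α] {f : α ⊕ α × Fin 1 → ℕ}
    (hf : IsRDRD (corona G (⊥ : SimpleGraph (Fin 1))) f) :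
    ∃ v, 3 ≤ f (.inl v) + f (.inr (v, 0)) := by
  by_contra! htight
  have hval v := (hf.leaf_cases_corona v).2 (by have := htight v; omega)
  obtain ⟨v⟩ := ‹Nonempty α›
  have hnbr : ∀ x, (corona G ⊥).Adj (.inl v) x → f x ≠ 3 ∧ (f x = 2 → x = .inr (v, 0)) := by
    rintro (u | ⟨u, c⟩) hvx
    · have := (hval u).1
      omega
    · obtain rfl : v = u := hvx
      obtain rfl : c = 0 := Subsingleton.elim c 0
      exact ⟨by simp [(hval v).2], fun _ => rfl⟩
  rcases hf.2.1 _ (hval v).1 with ⟨x, hvx, hx⟩ | ⟨x, y, hxy, hvx, hvy, hx, hy⟩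
  · exact (hnbr x hvx).1 hx
  · exact hxy (((hnbr x hvx).2 hx).trans ((hnbr y hvy).2 hy).symm)

theorem IsRDRD.two_mul_card_lt_sum_corona [Fintype α] [Nonempty α] {f : α ⊕ α × Fin 1 → ℕ}
    (hf : IsRDRD (corona G (⊥ : SimpleGraph (Fin 1))) f) :
    2 * Fintype.card α < ∑ x, f x := by
  obtain ⟨v, hv⟩ := hf.exists_three_le_corona
  calc 2 * Fintype.card α = ∑ _ : α, 2 := by simp [mul_comm]
    _ < ∑ v, (f (.inl v) + f (.inr (v, 0))) :=
      Finset.sum_lt_sum (fun v _ => (hf.leaf_cases_corona v).1) ⟨v, mem_univ v, hv⟩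
    _ = ∑ x, f x := (sum_corona_fin_one f).symm

end Corona

theorem stmt13 {α : Type*} [Fintype α] (G : SimpleGraph α) (hG : G.Connected) :
    2 * Fintype.card α + 1 ≤ gammaRdR (corona G (⊥ : SimpleGraph (Fin 1))) ∧
      gammaRdR (corona G (⊥ : SimpleGraph (Fin 1))) ≤ 3 * Fintype.card α := by
  have : Nonempty α := hG.nonempty
  refine ⟨le_gammaRdR fun f hf => hf.two_mul_card_lt_sum_corona, ?_⟩
  calc gammaRdR (corona G ⊥) ≤ _ := (isRDRD_corona_two_one G ⊥).gammaRdR_le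
    _ = 3 * Fintype.card α := by
      rw [sum_corona_fin_one]
      simp [mul_comm]
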